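/- arXiv:2207.04291 — 3 statements merged into one kernel-verified Lean document; each statement's English description precedes it below -/
import Mathlib

section
/- Let A be a real matrix with n columns, let M = AᵀA (a symmetric n×n real matrix) and let e ∈ Row(A) (the range of M). Let μ = σ²_min(A) > 0 be the smallest nonzero eigenvalue of M and s = trace(M) = ‖A‖_F². Then for every positive integer r ≥ 1, eᵀ(I - 2AᵀA/‖A‖_F²)ʳ e ≤ (1 - 2σ²_min(A)/‖A‖_F²)ʳ ‖e‖². -/
open Matrix

private lemma pow_mulVec_eigen {n : ℕ} (B : Matrix (Fin n) (Fin n) ℝ) (x : Fin n → ℝ) (t : ℝ)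
    (h : B *ᵥ x = t • x) (r : ℕ) : (B ^ r) *ᵥ x = t ^ r • x := by
  induction r with
  | zero => simp
  | succ k ih =>
    rw [pow_succ, ← mulVec_mulVec, h, mulVec_smul, ih, smul_smul, pow_succ, mul_comm]

private lemma dot_self_nonneg {k : ℕ} (x : Fin k → ℝ) : 0 ≤ x ⬝ᵥ x :=
  Finset.sum_nonneg fun _ _ => mul_self_nonneg _

private lemma dotProduct_sum' {k : ℕ} {ι : Type*} (t : Finset ι) (x : Fin k → ℝ)
    (f : ι → Fin k → ℝ) : x ⬝ᵥ (∑ i ∈ t, f i) = ∑ i ∈ t, x ⬝ᵥ f i := by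
  classical
  induction t using Finset.induction with
  | empty => simp
  | insert _ _ h ih => simp [Finset.sum_insert h, dotProduct_add, ih]

private lemma sum_dotProduct' {k : ℕ} {ι : Type*} (t : Finset ι) (x : Fin k → ℝ)
    (f : ι → Fin k → ℝ) : (∑ i ∈ t, f i) ⬝ᵥ x = ∑ i ∈ t, f i ⬝ᵥ x := by
  classical
  induction t using Finset.induction with
  | empty => simp
  | insert _ _ h ih => simp [Finset.sum_insert h, add_dotProduct, ih]

private lemma mulVec_sum' {k : ℕ} {ι : Type*} (t : Finset ι) (B : Matrix (Fin k) (Fin k) ℝ)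
    (f : ι → Fin k → ℝ) : B *ᵥ (∑ i ∈ t, f i) = ∑ i ∈ t, B *ᵥ f i := by
  classical
  induction t using Finset.induction with
  | empty => simp
  | insert _ _ h ih => simp [Finset.sum_insert h, mulVec_add, ih]

private lemma pow_le_pow_of_abs_le (x c : ℝ) (r : ℕ) (h : |x| ≤ c) : x ^ r ≤ c ^ r :=
  (le_abs_self _).trans ((abs_pow x r).le.trans (pow_le_pow_left₀ (abs_nonneg x) h r))

/-- For `e ∈ Row(A)`, `eᵀ(I - 2AᵀA/‖A‖_F²)ʳ e ≤ (1 - 2σ²_min(A)/‖A‖_F²)ʳ ‖e‖²`, where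
`σ²_min(A) = μ` is the smallest nonzero eigenvalue of `AᵀA` and `s = ‖A‖_F²`. -/
theorem stmt_5 {m n : ℕ} (A : Matrix (Fin m) (Fin n) ℝ)
    (s : ℝ) (hs : s = ∑ i, ∑ j, (A i j) ^ 2)
    (μ : ℝ) (hμpos : 0 < μ)
    (hμeig : ∃ v : Fin n → ℝ, v ≠ 0 ∧ (Aᵀ * A).mulVec v = μ • v)
    (hμmin : ∀ lam : ℝ, lam ≠ 0 → (∃ v : Fin n → ℝ, v ≠ 0 ∧ (Aᵀ * A).mulVec v = lam • v) →
      μ ≤ lam)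
    (e : Fin n → ℝ) (he : ∃ y : Fin m → ℝ, e = Aᵀ.mulVec y)
    (r : ℕ) (hr : 1 ≤ r) :
    e ⬝ᵥ ((1 - (2 / s) • (Aᵀ * A)) ^ r).mulVec e ≤
      (1 - 2 * μ / s) ^ r * ∑ j, (e j) ^ 2 := by
  classical
  set M : Matrix (Fin n) (Fin n) ℝ := Aᵀ * A with hMdef
  have hM : M.IsHermitian := by
    have := isHermitian_conjTranspose_mul_self A
    rwa [conjTranspose_eq_transpose_of_trivial] at this
  -- s is positive
  have hsnn : 0 ≤ s := by rw [hs]; positivity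
  have hspos : 0 < s := by
    rcases hsnn.lt_or_eq with h | h
    · exact h
    · exfalso
      have hA0 : A = 0 := by
        ext i j
        have h0 : ∑ i, ∑ j, (A i j) ^ 2 = 0 := by rw [← hs, ← h]
        have h1 := (Finset.sum_eq_zero_iff_of_nonneg
          (fun i _ => Finset.sum_nonneg fun j _ => sq_nonneg (A i j))).mp h0 i (Finset.mem_univ i)
        have h2 := (Finset.sum_eq_zero_iff_of_nonneg
          (fun j _ => sq_nonneg (A i j))).mp h1 j (Finset.mem_univ j)
        simpa using pow_eq_zero_iff (n := 2) (by norm_num) |>.mp h2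
      obtain ⟨v, hv0, hveq⟩ := hμeig
      have hM0 : M = 0 := by rw [hMdef, hA0]; simp
      rw [hM0, zero_mulVec] at hveq
      exact hv0 ((smul_eq_zero_iff_right hμpos.ne').mp hveq.symm)
  -- symmetry of M
  have hMsymm : Mᵀ = M := by
    ext i j
    have := congrFun (congrFun hM i) j
    simpa [conjTranspose_apply] using this
  have hsymmdot : ∀ x y : Fin n → ℝ, x ⬝ᵥ (M *ᵥ y) = (M *ᵥ x) ⬝ᵥ y := by
    intro x y
    conv_lhs => rw [← hMsymm]
    rw [dotProduct_mulVec, vecMul_transpose]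
  have hkey : ∀ x : Fin n → ℝ, x ⬝ᵥ (M *ᵥ x) = (A *ᵥ x) ⬝ᵥ (A *ᵥ x) := by
    intro x
    rw [hMdef, ← mulVec_mulVec, dotProduct_mulVec, vecMul_transpose]
  -- eigen data
  set V := hM.eigenvectorBasis with hVdef
  set lam := hM.eigenvalues with hlamdef
  have hVm : ∀ i, M *ᵥ (V i : Fin n → ℝ) = lam i • (V i : Fin n → ℝ) :=
    hM.mulVec_eigenvectorBasis
  have hVdot : ∀ i j, (V i : Fin n → ℝ) ⬝ᵥ (V j : Fin n → ℝ) = if i = j then 1 else 0 := by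
    intro i j
    have h := orthonormal_iff_ite.mp V.orthonormal i j
    have : (inner ℝ (V i) (V j) : ℝ) = (V i : Fin n → ℝ) ⬝ᵥ (V j : Fin n → ℝ) := by
      simp [dotProduct, PiLp.inner_apply, RCLike.inner_apply, mul_comm]
    rw [← this, h]
  have hVone : ∀ i, (V i : Fin n → ℝ) ⬝ᵥ (V i : Fin n → ℝ) = 1 := by
    intro i; rw [hVdot i i]; simp
  have hVne : ∀ i, (V i : Fin n → ℝ) ≠ 0 := by
    intro i h
    have := hVone i
    rw [h] at this
    simp at this
  -- eigenvalues are nonnegative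
  have hlam_nn : ∀ i, 0 ≤ lam i := by
    intro i
    have h1 : (V i : Fin n → ℝ) ⬝ᵥ (M *ᵥ (V i : Fin n → ℝ)) = lam i := by
      rw [hVm i, dotProduct_smul, smul_eq_mul, hVone i, mul_one]
    have h2 := hkey (V i : Fin n → ℝ)
    rw [h1] at h2
    rw [h2]
    exact dot_self_nonneg _
  -- sum of eigenvalues is the trace, which is s
  have htrace : M.trace = s := by
    rw [hMdef, hs, Matrix.trace]
    simp only [diag_apply, mul_apply, transpose_apply]
    rw [Finset.sum_comm]
    simp [pow_two]
  have hsum_eig : ∑ i, lam i = s := by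
    have h1 := hM.trace_eq_sum_eigenvalues
    rw [← htrace, h1]
    simp [hlamdef]
  -- μ is attained by some eigenvalue
  have hμattained : ∃ j, lam j = μ := by
    by_contra hcon
    push_neg at hcon
    obtain ⟨v, hv0, hveq⟩ := hμeig
    have hcoord : ∀ i, (V i : Fin n → ℝ) ⬝ᵥ v = 0 := by
      intro i
      have h1 : (V i : Fin n → ℝ) ⬝ᵥ (M *ᵥ v) = lam i * ((V i : Fin n → ℝ) ⬝ᵥ v) := by
        rw [hsymmdot, hVm i, smul_dotProduct, smul_eq_mul]
      rw [hveq, dotProduct_smul, smul_eq_mul] at h1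
      have h2 : (lam i - μ) * ((V i : Fin n → ℝ) ⬝ᵥ v) = 0 := by linarith
      rcases mul_eq_zero.mp h2 with h | h
      · exact absurd (by linarith : lam i = μ) (hcon i)
      · exact h
    apply hv0
    set vE : EuclideanSpace ℝ (Fin n) := (WithLp.equiv 2 _).symm v with hvE
    have hrepr0 : V.repr vE = 0 := by
      ext i
      rw [V.repr_apply_apply]
      have : (inner ℝ (V i) vE : ℝ) = (V i : Fin n → ℝ) ⬝ᵥ v := by
        simp [dotProduct, PiLp.inner_apply, RCLike.inner_apply, hvE, mul_comm]
      rw [this, hcoord i]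
      rfl
    have : vE = 0 := V.repr.injective (by rw [hrepr0]; simp)
    funext j
    exact congrFun (congrArg (fun (x : EuclideanSpace ℝ (Fin n)) => (x : Fin n → ℝ)) this) j
  -- expansion of e in the eigenbasis
  set c : Fin n → ℝ := fun i => (V i : Fin n → ℝ) ⬝ᵥ e with hcdef
  have hce : e = ∑ i, c i • (V i : Fin n → ℝ) := by
    set eE : EuclideanSpace ℝ (Fin n) := (WithLp.equiv 2 _).symm e with heE
    have h1 := V.sum_repr eE
    have h2 : ∀ i, V.repr eE i = c i := by
      intro i
      rw [V.repr_apply_apply]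
      simp [hcdef, dotProduct, PiLp.inner_apply, RCLike.inner_apply, heE, mul_comm]
    funext j
    conv_lhs => rw [show e j = eE j from rfl, ← h1]
    simp [Finset.sum_apply, h2]
  -- zero eigenvalue implies zero coefficient
  have hczero : ∀ i, lam i = 0 → c i = 0 := by
    intro i h0
    have hAV : A *ᵥ (V i : Fin n → ℝ) = 0 := by
      have h1 : (V i : Fin n → ℝ) ⬝ᵥ (M *ᵥ (V i : Fin n → ℝ)) = 0 := by
        rw [hVm i, h0]; simp
      rw [hkey] at h1
      exact dotProduct_self_eq_zero.mp h1
    obtain ⟨y, hy⟩ := he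
    show (V i : Fin n → ℝ) ⬝ᵥ e = 0
    rw [hy, dotProduct_mulVec, vecMul_transpose, hAV, zero_dotProduct]
  -- action of B on the eigenbasis
  set B : Matrix (Fin n) (Fin n) ℝ := 1 - (2 / s) • M with hBdef
  set t : Fin n → ℝ := fun i => 1 - 2 * lam i / s with htdef
  have hBV : ∀ i, B *ᵥ (V i : Fin n → ℝ) = t i • (V i : Fin n → ℝ) := by
    intro i
    rw [hBdef, sub_mulVec, one_mulVec, smul_mulVec, hVm i, smul_smul, htdef]
    simp only
    rw [sub_smul, one_smul]
    congr 2
    ring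
  have hBpow : ∀ i, (B ^ r) *ᵥ (V i : Fin n → ℝ) = (t i) ^ r • (V i : Fin n → ℝ) :=
    fun i => pow_mulVec_eigen B _ (t i) (hBV i) r
  -- compute the quadratic form
  have hLHS : e ⬝ᵥ ((B ^ r) *ᵥ e) = ∑ i, (t i) ^ r * (c i) ^ 2 := by
    conv_lhs => rw [hce]
    have hsum : (B ^ r) *ᵥ (∑ i, c i • (V i : Fin n → ℝ)) =
        ∑ i, c i • ((t i) ^ r • (V i : Fin n → ℝ)) := by
      rw [mulVec_sum']
      refine Finset.sum_congr rfl fun i _ => ?_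
      rw [mulVec_smul, hBpow i]
    rw [hsum, dotProduct_sum']
    refine Finset.sum_congr rfl fun i _ => ?_
    rw [sum_dotProduct', Finset.sum_eq_single i]
    · rw [smul_dotProduct, dotProduct_smul, dotProduct_smul, hVdot i i, if_pos rfl]
      simp only [smul_eq_mul, mul_one]; ring
    · intro j _ hji
      rw [smul_dotProduct, dotProduct_smul, dotProduct_smul, hVdot j i, if_neg hji]
      simp
    · intro h; exact absurd (Finset.mem_univ i) h
  have hnorm : ∑ j, (e j) ^ 2 = ∑ i, (c i) ^ 2 := by
    have h1 : ∑ j, (e j) ^ 2 = e ⬝ᵥ e := by simp [dotProduct, pow_two]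
    rw [h1]
    conv_lhs => rw [hce]
    rw [sum_dotProduct']
    refine Finset.sum_congr rfl fun i _ => ?_
    rw [dotProduct_sum', Finset.sum_eq_single i]
    · rw [smul_dotProduct, dotProduct_smul, hVdot i i, if_pos rfl]
      simp only [smul_eq_mul, mul_one]; ring
    · intro j _ hji
      rw [smul_dotProduct, dotProduct_smul, hVdot i j, if_neg (fun h => hji h.symm)]
      simp
    · intro h; exact absurd (Finset.mem_univ i) h
  rw [hLHS, hnorm, Finset.mul_sum]
  refine Finset.sum_le_sum fun i _ => ?_
  -- termwise bound
  rcases eq_or_ne (lam i) 0 with h0 | h0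
  · rw [hczero i h0]; simp
  rcases eq_or_ne (lam i) μ with hiμ | hiμ
  · rw [htdef]; simp only; rw [hiμ]
  -- lam i ≠ 0, lam i ≠ μ
  have hμle : μ ≤ lam i := hμmin (lam i) h0 ⟨(V i : Fin n → ℝ), hVne i, hVm i⟩
  obtain ⟨j, hj⟩ := hμattained
  have hji : j ≠ i := fun h => hiμ (by rw [← h, hj])
  have hsums : lam i + μ ≤ s := by
    have h1 : lam j ≤ ∑ k ∈ Finset.univ.erase i, lam k :=
      Finset.single_le_sum (fun k _ => hlam_nn k)
        (Finset.mem_erase.mpr ⟨hji, Finset.mem_univ j⟩)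
    have h2 : lam i + ∑ k ∈ Finset.univ.erase i, lam k = ∑ k, lam k :=
      Finset.add_sum_erase _ _ (Finset.mem_univ i)
    rw [hsum_eig] at h2
    rw [← hj]
    linarith
  have habs : |t i| ≤ 1 - 2 * μ / s := by
    rw [htdef]
    simp only
    rw [abs_le]
    constructor
    · have h1 : 2 * lam i ≤ 2 * s - 2 * μ := by linarith
      have h2 : 2 * lam i / s ≤ (2 * s - 2 * μ) / s := by
        exact div_le_div_of_nonneg_right h1 hspos.le |>.trans_eq rfl
      have h3 : (2 * s - 2 * μ) / s = 2 - 2 * μ / s := by field_simp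
      rw [h3] at h2
      linarith
    · have h1 : 2 * μ ≤ 2 * lam i := by linarith
      have h2 : 2 * μ / s ≤ 2 * lam i / s := div_le_div_of_nonneg_right h1 hspos.le |>.trans_eq rfl
      linarith
  have := pow_le_pow_of_abs_le (t i) (1 - 2 * μ / s) r habs
  exact mul_le_mul_of_nonneg_right this (sq_nonneg _)
end

section
/- Fix F¹ = F⁰ ≥ 0 and let (Fᵏ)_{k≥0} be a sequence of nonnegative reals satisfying F^{k+1} ≤ γ₁Fᵏ + γ₂F^{k-1} for all k ≥ 1, where γ₂ ≥ 0, γ₁ + γ₂ < 1, and at least one of γ₁, γ₂ is positive. Then F^{k+1} ≤ qᵏ(1+τ)F⁰ for all k ≥ 0, where q = (γ₁ + √(γ₁² + 4γ₂))/2 and τ = q - γ₁ ≥ 0. Moreover q ≥ γ₁ + γ₂, with equality if and only if γ₂ = 0. -/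
/-- Two-term linear recurrence inequality lemma (heavy-ball momentum analysis):
if `F¹ = F⁰ ≥ 0`, `F` nonnegative, `F^{k+1} ≤ γ₁Fᵏ + γ₂F^{k-1}` for `k ≥ 1`, with
`γ₂ ≥ 0`, `γ₁ + γ₂ < 1` and one of `γ₁, γ₂` positive, then `F^{k+1} ≤ qᵏ(1+τ)F⁰` where
`q = (γ₁ + √(γ₁² + 4γ₂))/2`, `τ = q - γ₁ ≥ 0`; moreover `q ≥ γ₁ + γ₂` with equality
iff `γ₂ = 0`. -/
theorem stmt_8 (F : ℕ → ℝ) (γ₁ γ₂ : ℝ)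
    (hF10 : F 1 = F 0) (hFnonneg : ∀ k, 0 ≤ F k)
    (hrec : ∀ k : ℕ, 1 ≤ k → F (k + 1) ≤ γ₁ * F k + γ₂ * F (k - 1))
    (hγ₂ : 0 ≤ γ₂) (hsum : γ₁ + γ₂ < 1) (hpos : 0 < γ₁ ∨ 0 < γ₂)
    (q τ : ℝ) (hq : q = (γ₁ + Real.sqrt (γ₁ ^ 2 + 4 * γ₂)) / 2) (hτ : τ = q - γ₁) :
    (∀ k : ℕ, F (k + 1) ≤ q ^ k * (1 + τ) * F 0) ∧ 0 ≤ τ ∧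
      γ₁ + γ₂ ≤ q ∧ (q = γ₁ + γ₂ ↔ γ₂ = 0) := by
  have hd : (0:ℝ) ≤ γ₁ ^ 2 + 4 * γ₂ := by positivity
  set s := Real.sqrt (γ₁ ^ 2 + 4 * γ₂) with hsdef
  have hs : s ^ 2 = γ₁ ^ 2 + 4 * γ₂ := Real.sq_sqrt hd
  have hs0 : 0 ≤ s := Real.sqrt_nonneg _
  have habs : |γ₁| ≤ s := by
    calc |γ₁| = Real.sqrt (γ₁ ^ 2) := (Real.sqrt_sq_eq_abs γ₁).symm
      _ ≤ s := Real.sqrt_le_sqrt (by linarith)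
  have hnegabs : -γ₁ ≤ s := le_trans (neg_le_abs γ₁) habs
  have hposabs : γ₁ ≤ s := le_trans (le_abs_self γ₁) habs
  have hq0 : 0 ≤ q := by rw [hq]; linarith
  have hτ0 : 0 ≤ τ := by rw [hτ, hq]; linarith
  have hqeq : q ^ 2 = γ₁ * q + γ₂ := by
    rw [hq]; field_simp; nlinarith [hs]
  have hγ₂τ : γ₂ = q * τ := by rw [hτ]; nlinarith [hqeq]
  have key : ∀ k : ℕ, F (k + 1) + τ * F k ≤ q ^ k * (1 + τ) * F 0 := by
    intro k
    induction k with
    | zero => rw [hF10]; ring_nf; simp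
    | succ n ih =>
      have h1 := hrec (n + 1) (by omega)
      simp only [Nat.add_sub_cancel] at h1
      have hγ₁ : γ₁ = q - τ := by rw [hτ]; ring
      calc F (n + 1 + 1) + τ * F (n + 1)
          ≤ q * (F (n + 1) + τ * F n) := by rw [hγ₁, hγ₂τ] at h1; nlinarith [h1]
        _ ≤ q * (q ^ n * (1 + τ) * F 0) := mul_le_mul_of_nonneg_left ih hq0
        _ = q ^ (n + 1) * (1 + τ) * F 0 := by ring
  have hmain : ∀ k : ℕ, F (k + 1) ≤ q ^ k * (1 + τ) * F 0 := by
    intro k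
    have := key k
    nlinarith [mul_nonneg hτ0 (hFnonneg k)]
  have hge : γ₁ + γ₂ ≤ q := by
    rw [hq]
    have hsge : γ₁ + 2 * γ₂ ≤ s := by
      rcases le_or_gt (γ₁ + 2 * γ₂) 0 with h | h
      · linarith
      · nlinarith [hs, hs0, hγ₂, hsum]
    linarith
  refine ⟨hmain, hτ0, hge, ?_, ?_⟩
  · intro heq
    have hseq : s = γ₁ + 2 * γ₂ := by rw [hq] at heq; linarith
    nlinarith [hs, hseq]
  · intro h0
    subst h0
    have hγ₁ : 0 < γ₁ := by rcases hpos with h | h; exact h; linarith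
    have : s = γ₁ := by
      rw [hsdef]
      simp only [mul_zero, add_zero]
      rw [Real.sqrt_sq hγ₁.le]
    rw [hq, this]; ring
end

section
/- Let A ∈ ℝ^{m×n} with nonzero rows, Ax = b consistent, x⁰ arbitrary, x₀* = A†b + (I - A†A)x⁰, and let (xᵏ) be the RrDR iterates with relaxation α ∈ (0,1) and r reflections per step sampled independently with row probabilities ‖a_i‖²/‖A‖_F². Then E[‖xᵏ - x₀*‖²] ≤ (α² + (1-α)² + 2α(1-α)(1 - 2σ²_min(A)/‖A‖_F²)ʳ)ᵏ ‖x⁰ - x₀*‖². -/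
/-!
Subtracting `x₀*`, which solves `Ax = b`, turns every affine reflection into the Householder
reflection `Hᵢ = I - 2aᵢaᵢᵀ/‖aᵢ‖²`, so the error `e = x - x₀*` evolves by
`e ↦ (1-α)e + α H_{j_r}⋯H_{j_1}e`. Products of reflections are isometries, hence
`‖(1-α)e + αHe‖² = ((1-α)² + α²)‖e‖² + 2α(1-α)⟪e, He⟫`, and by independence the expected product is
`(E Hᵢ)ʳ = (I - 2AᵀA/‖A‖_F²)ʳ`. The error stays in `Row A = (ker AᵀA)^⊥`. There, expanding in an
eigenbasis of `AᵀA`, each relevant eigenvalue `λ` is either `σ²_min` or satisfies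
`σ²_min ≤ λ ≤ ‖A‖_F² - σ²_min` (the eigenvalues are nonnegative and sum to `‖A‖_F²`), so
`(1 - 2λ/‖A‖_F²)ʳ ≤ (1 - 2σ²_min/‖A‖_F²)ʳ`. This gives a one-step contraction of the expected
squared error, which iterates over the independent steps.
-/

open Matrix

theorem one_sub_two_mul_div_pow_le {s μ t : ℝ} (hs : 0 < s) (hμt : μ ≤ t)
    (ht : t = μ ∨ t + μ ≤ s) (r : ℕ) : (1 - 2 * t / s) ^ r ≤ (1 - 2 * μ / s) ^ r := by
  rcases ht with rfl | ht
  · rfl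
  have habs : |1 - 2 * t / s| ≤ 1 - 2 * μ / s := by
    have hlow : 2 * μ / s ≤ 2 * t / s := by gcongr
    have hup : 2 * t / s + 2 * μ / s ≤ 2 := by
      rw [← add_div, div_le_iff₀ hs]
      linarith
    exact abs_le.mpr ⟨by linarith, by linarith⟩
  calc (1 - 2 * t / s) ^ r ≤ |1 - 2 * t / s| ^ r := by rw [← abs_pow]; exact le_abs_self _
    _ ≤ (1 - 2 * μ / s) ^ r := pow_le_pow_left₀ (abs_nonneg _) habs r

theorem relax_factor_nonneg {α μ t : ℝ} (hα : 0 ≤ α * (1 - α)) (hμ : 0 ≤ μ) (hμt : μ ≤ t)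
    (r : ℕ) : 0 ≤ α ^ 2 + (1 - α) ^ 2 + 2 * α * (1 - α) * (1 - 2 * μ / t) ^ r := by
  have hle : 2 * μ / t ≤ 2 := div_le_of_le_mul₀ (hμ.trans hμt) zero_le_two (by linarith)
  have hge : 0 ≤ 2 * μ / t := div_nonneg (by linarith) (hμ.trans hμt)
  have habs : |(1 - 2 * μ / t) ^ r| ≤ 1 := by
    rw [abs_pow]
    exact pow_le_one₀ (abs_nonneg _) (abs_le.mpr ⟨by linarith, by linarith⟩)
  nlinarith [mul_nonneg hα (neg_le_iff_add_nonneg.mp (abs_le.mp habs).1), sq_nonneg (2 * α - 1)]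

section IndependentSteps

theorem sum_fun_fin_succ {ι β : Type*} [Fintype ι] [AddCommMonoid β] {k : ℕ}
    (f : (Fin (k + 1) → ι) → β) : ∑ s, f s = ∑ i, ∑ s : Fin k → ι, f (Fin.cons i s) := by
  rw [← (Fin.consEquiv fun _ => ι).sum_comp, Fintype.sum_prod_type]
  rfl

theorem foldl_ofFn_cons {ι β : Type*} (g : β → ι → β) (x : β) {k : ℕ} (i : ι)
    (s : Fin k → ι) :
    (List.ofFn (Fin.cons i s : Fin (k + 1) → ι)).foldl g x = (List.ofFn s).foldl g (g x i) := by
  simp [List.ofFn_succ]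

variable {ι : Type*} [Fintype ι]

theorem sum_prod_smul_foldl_mulVec {R n : Type*} [CommSemiring R] [Fintype n] [DecidableEq n]
    (p : ι → R) (T : ι → Matrix n n R) (r : ℕ) (w : n → R) :
    ∑ s : Fin r → ι, (∏ j, p (s j)) • (List.ofFn s).foldl (fun z i => T i *ᵥ z) w
      = (∑ i, p i • T i) ^ r *ᵥ w := by
  induction r generalizing w with
  | zero => simp
  | succ r ih =>
    simp_rw [sum_fun_fin_succ, foldl_ofFn_cons, Fin.prod_univ_succ, Fin.cons_zero, Fin.cons_succ,
      mul_smul, ← Finset.smul_sum, ih, pow_succ, ← mulVec_mulVec, sum_mulVec, mulVec_sum,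
      smul_mulVec, mulVec_smul]

theorem sum_prod_mul_foldl_ofFn_le {V : Type*} (q : ι → ℝ) (hq : ∀ i, 0 ≤ q i)
    (g : ι → V → V) (Φ : V → ℝ) (P : V → Prop) (hP : ∀ i y, P y → P (g i y)) {ρ : ℝ} (hρ : 0 ≤ ρ)
    (hdecay : ∀ y, P y → ∑ i, q i * Φ (g i y) ≤ ρ * Φ y) (k : ℕ) {x : V} (hx : P x) :
    ∑ s : Fin k → ι, (∏ j, q (s j)) * Φ ((List.ofFn s).foldl (fun y i => g i y) x)
      ≤ ρ ^ k * Φ x := by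
  induction k generalizing x with
  | zero => simp
  | succ k ih =>
    calc ∑ s : Fin (k + 1) → ι,
          (∏ j, q (s j)) * Φ ((List.ofFn s).foldl (fun y i => g i y) x)
        = ∑ i, q i * ∑ s : Fin k → ι,
            (∏ j, q (s j)) * Φ ((List.ofFn s).foldl (fun y i => g i y) (g i x)) := by
          simp_rw [sum_fun_fin_succ, foldl_ofFn_cons, Fin.prod_univ_succ, Fin.cons_zero,
            Fin.cons_succ, Finset.mul_sum, mul_assoc]
      _ ≤ ∑ i, q i * (ρ ^ k * Φ (g i x)) :=
          Finset.sum_le_sum fun i _ => mul_le_mul_of_nonneg_left (ih (hP i x hx)) (hq i)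
      _ = ρ ^ k * ∑ i, q i * Φ (g i x) := by
          rw [Finset.mul_sum]
          exact Finset.sum_congr rfl fun i _ => by ring
      _ ≤ ρ ^ k * (ρ * Φ x) := mul_le_mul_of_nonneg_left (hdecay x hx) (pow_nonneg hρ k)
      _ = ρ ^ (k + 1) * Φ x := by ring

end IndependentSteps

namespace Matrix

section Householder

variable {m n : Type*}

theorem trace_transpose_mul_self [Fintype m] [Fintype n] (A : Matrix m n ℝ) :
    (Aᵀ * A).trace = ∑ i, A i ⬝ᵥ A i := by
  simp only [trace, diag, mul_apply, transpose_apply, dotProduct]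
  exact Finset.sum_comm

theorem sum_vecMulVec_row [Fintype m] (A : Matrix m n ℝ) :
    ∑ i, vecMulVec (A i) (A i) = Aᵀ * A := by
  ext j l
  simp [vecMulVec, mul_apply, Matrix.sum_apply]

variable [Fintype n] [DecidableEq n]

/-- For `a = 0` this is the identity, since `2 / 0 = 0`. -/
noncomputable def householder (a : n → ℝ) : Matrix n n ℝ :=
  1 - (2 / (a ⬝ᵥ a)) • vecMulVec a a

theorem householder_mulVec (a z : n → ℝ) :
    householder a *ᵥ z = z - (2 * (a ⬝ᵥ z) / (a ⬝ᵥ a)) • a := by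
  ext l
  simp only [householder, sub_mulVec, one_mulVec, smul_mulVec, vecMulVec_mulVec,
    op_smul_eq_smul, Pi.sub_apply, Pi.smul_apply, smul_eq_mul, sub_right_inj]
  ring

theorem dotProduct_self_householder_mulVec (a z : n → ℝ) :
    householder a *ᵥ z ⬝ᵥ householder a *ᵥ z = z ⬝ᵥ z := by
  rw [householder_mulVec]
  rcases eq_or_ne (a ⬝ᵥ a) 0 with ha | ha
  · simp [ha]
  · simp only [sub_dotProduct, dotProduct_sub, smul_dotProduct, dotProduct_smul, smul_eq_mul,
      dotProduct_comm a z]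
    field_simp
    ring

theorem sub_smul_sub_eq_householder_mulVec {a x : n → ℝ} {β : ℝ} (hx : a ⬝ᵥ x = β)
    (z : n → ℝ) : z - (2 * (a ⬝ᵥ z - β) / (a ⬝ᵥ a)) • a - x = householder a *ᵥ (z - x) := by
  rw [householder_mulVec, dotProduct_sub, hx, sub_right_comm]

theorem dotProduct_householder_row_mulVec_eq_zero {A : Matrix m n ℝ} {v z : n → ℝ}
    (hv : A *ᵥ v = 0) (hz : v ⬝ᵥ z = 0) (i : m) : v ⬝ᵥ householder (A i) *ᵥ z = 0 := by
  have hvi : v ⬝ᵥ A i = 0 := by rw [dotProduct_comm]; exact congrFun hv i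
  rw [householder_mulVec, dotProduct_sub, dotProduct_smul, hvi, hz, smul_zero, sub_zero]

theorem sum_smul_householder_row [Fintype m] {A : Matrix m n ℝ}
    (hA : (Aᵀ * A).trace ≠ 0) :
    ∑ i, (A i ⬝ᵥ A i / (Aᵀ * A).trace) • householder (A i)
      = 1 - (2 / (Aᵀ * A).trace) • (Aᵀ * A) := by
  have hcoef : ∀ i,
      (A i ⬝ᵥ A i / (Aᵀ * A).trace) • (2 / (A i ⬝ᵥ A i)) • vecMulVec (A i) (A i)
        = (2 / (Aᵀ * A).trace) • vecMulVec (A i) (A i) := by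
    intro i
    rcases eq_or_ne (A i ⬝ᵥ A i) 0 with hi | hi
    · simp [dotProduct_self_eq_zero.mp hi]
    · rw [smul_smul]; congr 1; field_simp
  simp only [householder, smul_sub, Finset.sum_sub_distrib, hcoef, ← Finset.smul_sum,
    sum_vecMulVec_row, ← Finset.sum_smul, ← Finset.sum_div, ← trace_transpose_mul_self,
    div_self hA, one_smul]

end Householder

section Spectral

theorem posSemidef_transpose_mul_self {m n : Type*} [Fintype m] [Fintype n] (A : Matrix m n ℝ) :
    (Aᵀ * A).PosSemidef := by
  simpa using posSemidef_conjTranspose_mul_self A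

variable {n : Type*} [Fintype n] [DecidableEq n] {S : Matrix n n ℝ}

theorem IsHermitian.exists_eigenvalues_eq (hS : S.IsHermitian) {μ : ℝ} {v : n → ℝ}
    (hv : v ≠ 0) (hSv : S *ᵥ v = μ • v) : ∃ j, hS.eigenvalues j = μ := by
  have hμ : μ ∈ spectrum ℝ (toLin' S) :=
    (Module.End.hasEigenvalue_of_hasEigenvector
      ⟨Module.End.mem_eigenspace_iff.mpr (by simpa using hSv), hv⟩).mem_spectrum
  rwa [spectrum_toLin', hS.spectrum_real_eq_range_eigenvalues] at hμ

theorem IsHermitian.sum_dotProduct_eigenvectorBasis_mul (hS : S.IsHermitian)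
    (x y : n → ℝ) :
    ∑ j, (x ⬝ᵥ ⇑(hS.eigenvectorBasis j)) * (⇑(hS.eigenvectorBasis j) ⬝ᵥ y) = x ⬝ᵥ y := by
  have := hS.eigenvectorBasis.sum_inner_mul_inner (WithLp.toLp 2 x) (WithLp.toLp 2 y)
  simpa [EuclideanSpace.inner_eq_star_dotProduct, dotProduct_comm, mul_comm] using this

theorem PosSemidef.sum_eigenvalues_le_trace (hS : S.PosSemidef) (J : Finset n) :
    ∑ j ∈ J, hS.1.eigenvalues j ≤ S.trace := by
  rw [hS.1.trace_eq_sum_eigenvalues]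
  simpa using Finset.sum_le_univ_sum_of_nonneg hS.eigenvalues_nonneg

theorem PosSemidef.le_trace_of_mulVec_eq_smul (hS : S.PosSemidef) {μ : ℝ}
    (hμ : ∃ v : n → ℝ, v ≠ 0 ∧ S *ᵥ v = μ • v) : μ ≤ S.trace := by
  obtain ⟨v, hv, hSv⟩ := hμ
  obtain ⟨j, hj⟩ := hS.1.exists_eigenvalues_eq hv hSv
  simpa [hj] using hS.sum_eigenvalues_le_trace {j}

theorem pow_mulVec_of_mulVec_eq_smul {M : Matrix n n ℝ} {v : n → ℝ} {t : ℝ}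
    (hv : M *ᵥ v = t • v) (r : ℕ) : M ^ r *ᵥ v = t ^ r • v := by
  induction r with
  | zero => simp
  | succ r ih => rw [pow_succ, ← mulVec_mulVec, hv, mulVec_smul, ih, smul_smul, ← pow_succ']

theorem PosSemidef.dotProduct_pow_mulVec_le (hS : S.PosSemidef) {μ : ℝ}
    (hμ : ∃ v : n → ℝ, v ≠ 0 ∧ S *ᵥ v = μ • v)
    (hμmin : ∀ lam : ℝ, lam ≠ 0 → (∃ v : n → ℝ, v ≠ 0 ∧ S *ᵥ v = lam • v) → μ ≤ lam)
    {w : n → ℝ} (hw : ∀ v, S *ᵥ v = 0 → v ⬝ᵥ w = 0) (r : ℕ) :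
    w ⬝ᵥ (1 - (2 / S.trace) • S) ^ r *ᵥ w ≤ (1 - 2 * μ / S.trace) ^ r * (w ⬝ᵥ w) := by
  set ev := hS.1.eigenvalues
  set v : n → n → ℝ := fun j => ⇑(hS.1.eigenvectorBasis j)
  have hv0 : ∀ j, v j ≠ 0 := fun j =>
    (WithLp.ofLp_eq_zero 2).ne.2 (hS.1.eigenvectorBasis.orthonormal.ne_zero j)
  have hSv : ∀ j, S *ᵥ v j = ev j • v j := hS.1.mulVec_eigenvectorBasis
  obtain ⟨u, hu, hSu⟩ := hμ
  obtain ⟨j₀, hj₀⟩ := hS.1.exists_eigenvalues_eq hu hSu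
  have hMv : ∀ j,
      ((1 - (2 / S.trace) • S) ^ r)ᵀ *ᵥ v j = (1 - 2 * ev j / S.trace) ^ r • v j := by
    intro j
    have hSt : Sᵀ = S := (by simpa using hS.1 : S.IsSymm)
    rw [transpose_pow, transpose_sub, transpose_one, transpose_smul, hSt]
    refine pow_mulVec_of_mulVec_eq_smul ?_ r
    ext l
    simp only [sub_mulVec, one_mulVec, smul_mulVec, hSv, Pi.sub_apply, Pi.smul_apply,
      smul_eq_mul]
    ring
  have hterm : ∀ j, (1 - 2 * ev j / S.trace) ^ r * (w ⬝ᵥ v j) ^ 2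
      ≤ (1 - 2 * μ / S.trace) ^ r * (w ⬝ᵥ v j) ^ 2 := by
    intro j
    rcases eq_or_ne (w ⬝ᵥ v j) 0 with hc | hc
    · simp [hc]
    have hev : ev j ≠ 0 := fun h => hc <| by
      rw [dotProduct_comm]
      exact hw _ (by rw [hSv, h, zero_smul])
    have hs : 0 < S.trace := by
      have := hS.sum_eigenvalues_le_trace {j}
      rw [Finset.sum_singleton] at this
      exact (lt_of_le_of_ne (hS.eigenvalues_nonneg j) hev.symm).trans_le this
    have hlt : ev j = μ ∨ ev j + μ ≤ S.trace := by
      by_cases hj : j = j₀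
      · exact .inl (hj ▸ hj₀)
      · rw [← hj₀, ← Finset.sum_pair hj]
        exact .inr (hS.sum_eigenvalues_le_trace _)
    exact mul_le_mul_of_nonneg_right
      (one_sub_two_mul_div_pow_le hs (hμmin _ hev ⟨v j, hv0 j, hSv j⟩) hlt r) (sq_nonneg _)
  calc w ⬝ᵥ (1 - (2 / S.trace) • S) ^ r *ᵥ w
      = ∑ j, (1 - 2 * ev j / S.trace) ^ r * (w ⬝ᵥ v j) ^ 2 := by
        rw [← hS.1.sum_dotProduct_eigenvectorBasis_mul]
        refine Finset.sum_congr rfl fun j _ => ?_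
        rw [dotProduct_mulVec, ← mulVec_transpose, hMv, smul_dotProduct, smul_eq_mul,
          dotProduct_comm (v j)]
        ring
    _ ≤ ∑ j, (1 - 2 * μ / S.trace) ^ r * (w ⬝ᵥ v j) ^ 2 :=
        Finset.sum_le_sum fun j _ => hterm j
    _ = (1 - 2 * μ / S.trace) ^ r * (w ⬝ᵥ w) := by
        rw [← Finset.mul_sum, ← hS.1.sum_dotProduct_eigenvectorBasis_mul]
        simp only [sq]
        congr 1
        exact Finset.sum_congr rfl fun j _ => by rw [dotProduct_comm (v j) w]

end Spectral

end Matrix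

namespace RrDR

variable {m n : Type*} [Fintype n] [DecidableEq n]

noncomputable def reflectRows (A : Matrix m n ℝ) (s : List m) (z : n → ℝ) : n → ℝ :=
  s.foldl (fun z i => householder (A i) *ᵥ z) z

theorem dotProduct_self_reflectRows (A : Matrix m n ℝ) (s : List m) (z : n → ℝ) :
    reflectRows A s z ⬝ᵥ reflectRows A s z = z ⬝ᵥ z := by
  induction s generalizing z with
  | nil => rfl
  | cons i s ih =>
    simp only [reflectRows, List.foldl_cons] at ih ⊢
    rw [ih, dotProduct_self_householder_mulVec]

theorem dotProduct_reflectRows_eq_zero {A : Matrix m n ℝ} {v z : n → ℝ} (hv : A *ᵥ v = 0)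
    (hz : v ⬝ᵥ z = 0) (s : List m) : v ⬝ᵥ reflectRows A s z = 0 := by
  induction s generalizing z with
  | nil => exact hz
  | cons i s ih =>
    simp only [reflectRows, List.foldl_cons] at ih ⊢
    exact ih (dotProduct_householder_row_mulVec_eq_zero hv hz i)

theorem foldl_sub_eq_reflectRows {A : Matrix m n ℝ} {b : m → ℝ} {x : n → ℝ}
    (hx : A *ᵥ x = b) (s : List m) (z : n → ℝ) :
    s.foldl (fun z i => z - (2 * (A i ⬝ᵥ z - b i) / (A i ⬝ᵥ A i)) • A i) z - x
      = reflectRows A s (z - x) := by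
  induction s generalizing z with
  | nil => rfl
  | cons i s ih =>
    simp only [reflectRows, List.foldl_cons] at ih ⊢
    rw [ih, sub_smul_sub_eq_householder_mulVec (congrFun hx i)]

theorem sum_prod_smul_reflectRows [Fintype m] {A : Matrix m n ℝ} (hA : (Aᵀ * A).trace ≠ 0)
    (r : ℕ) (w : n → ℝ) :
    ∑ s : Fin r → m,
        (∏ j, A (s j) ⬝ᵥ A (s j) / (Aᵀ * A).trace) • reflectRows A (List.ofFn s) w
      = (1 - (2 / (Aᵀ * A).trace) • (Aᵀ * A)) ^ r *ᵥ w := by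
  rw [← sum_smul_householder_row hA]
  exact sum_prod_smul_foldl_mulVec (fun i => A i ⬝ᵥ A i / (Aᵀ * A).trace)
    (fun i => householder (A i)) r w

noncomputable def relaxReflectRows (A : Matrix m n ℝ) (α : ℝ) (s : List m) (e : n → ℝ) :
    n → ℝ :=
  (1 - α) • e + α • reflectRows A s e

theorem dotProduct_relaxReflectRows_eq_zero {A : Matrix m n ℝ} {v e : n → ℝ} (hv : A *ᵥ v = 0)
    (he : v ⬝ᵥ e = 0) (α : ℝ) (s : List m) : v ⬝ᵥ relaxReflectRows A α s e = 0 := by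
  rw [relaxReflectRows, dotProduct_add, dotProduct_smul, dotProduct_smul, he,
    dotProduct_reflectRows_eq_zero hv he, smul_zero, smul_zero, add_zero]

theorem dotProduct_self_relaxReflectRows (A : Matrix m n ℝ) (α : ℝ) (s : List m) (e : n → ℝ) :
    relaxReflectRows A α s e ⬝ᵥ relaxReflectRows A α s e
      = ((1 - α) ^ 2 + α ^ 2) * (e ⬝ᵥ e) + 2 * α * (1 - α) * (e ⬝ᵥ reflectRows A s e) := by
  simp only [relaxReflectRows, add_dotProduct, dotProduct_add, smul_dotProduct, dotProduct_smul,
    smul_eq_mul, dotProduct_self_reflectRows, dotProduct_comm (reflectRows A s e) e]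
  ring

theorem sum_prod_mul_dotProduct_self_relaxReflectRows_le [Fintype m] {A : Matrix m n ℝ}
    (hA : (Aᵀ * A).trace ≠ 0) {μ : ℝ} (hμ : ∃ v : n → ℝ, v ≠ 0 ∧ (Aᵀ * A) *ᵥ v = μ • v)
    (hμmin : ∀ lam : ℝ, lam ≠ 0 → (∃ v : n → ℝ, v ≠ 0 ∧ (Aᵀ * A) *ᵥ v = lam • v) → μ ≤ lam)
    {α : ℝ} (hα : 0 ≤ α * (1 - α)) (r : ℕ) {e : n → ℝ}
    (he : ∀ v, A *ᵥ v = 0 → v ⬝ᵥ e = 0) :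
    ∑ s : Fin r → m, (∏ j, A (s j) ⬝ᵥ A (s j) / (Aᵀ * A).trace) *
        (relaxReflectRows A α (List.ofFn s) e ⬝ᵥ relaxReflectRows A α (List.ofFn s) e)
      ≤ (α ^ 2 + (1 - α) ^ 2 + 2 * α * (1 - α) * (1 - 2 * μ / (Aᵀ * A).trace) ^ r)
          * (e ⬝ᵥ e) := by
  set q : m → ℝ := fun i => A i ⬝ᵥ A i / (Aᵀ * A).trace
  have hq : ∑ s : Fin r → m, ∏ j, q (s j) = 1 := by
    rw [← Fintype.sum_pow, ← Finset.sum_div, ← trace_transpose_mul_self, div_self hA, one_pow]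
  have hmean : ∑ s : Fin r → m, (∏ j, q (s j)) * (e ⬝ᵥ reflectRows A (List.ofFn s) e)
      = e ⬝ᵥ (1 - (2 / (Aᵀ * A).trace) • (Aᵀ * A)) ^ r *ᵥ e := by
    simp only [← sum_prod_smul_reflectRows hA, dotProduct_sum, dotProduct_smul, smul_eq_mul, q]
  have hker : ∀ v, (Aᵀ * A) *ᵥ v = 0 → v ⬝ᵥ e = 0 := fun v hv => he v <| by
    simpa using (ker_mulVecLin_transpose_mul_self A).le (LinearMap.mem_ker.mpr hv)
  have hcontr := (posSemidef_transpose_mul_self A).dotProduct_pow_mulVec_le hμ hμmin hker r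
  simp only [dotProduct_self_relaxReflectRows]
  calc ∑ s : Fin r → m, (∏ j, q (s j)) * (((1 - α) ^ 2 + α ^ 2) * (e ⬝ᵥ e)
          + 2 * α * (1 - α) * (e ⬝ᵥ reflectRows A (List.ofFn s) e))
      = (∑ s : Fin r → m, ∏ j, q (s j)) * (((1 - α) ^ 2 + α ^ 2) * (e ⬝ᵥ e))
          + 2 * α * (1 - α) *
            ∑ s : Fin r → m, (∏ j, q (s j)) * (e ⬝ᵥ reflectRows A (List.ofFn s) e) := by
        rw [Finset.sum_mul, Finset.mul_sum, ← Finset.sum_add_distrib]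
        exact Finset.sum_congr rfl fun s _ => by ring
    _ = ((1 - α) ^ 2 + α ^ 2) * (e ⬝ᵥ e)
          + 2 * α * (1 - α) * (e ⬝ᵥ (1 - (2 / (Aᵀ * A).trace) • (Aᵀ * A)) ^ r *ᵥ e) := by
        rw [hq, hmean, one_mul]
    _ ≤ ((1 - α) ^ 2 + α ^ 2) * (e ⬝ᵥ e)
          + 2 * α * (1 - α) * ((1 - 2 * μ / (Aᵀ * A).trace) ^ r * (e ⬝ᵥ e)) := by
        gcongr
        nlinarith
    _ = _ := by ring

theorem mulVec_pinv_add_one_sub_mulVec [Fintype m] {A : Matrix m n ℝ} {Adag : Matrix n m ℝ}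
    (hP1 : A * Adag * A = A) {b : m → ℝ} {xs : n → ℝ} (hb : b = A *ᵥ xs) (x0 : n → ℝ) :
    A *ᵥ (Adag *ᵥ b + (1 - Adag * A) *ᵥ x0) = b := by
  rw [mulVec_add, mulVec_mulVec, mulVec_mulVec, Matrix.mul_sub, Matrix.mul_one,
    ← Matrix.mul_assoc, hP1, sub_self, zero_mulVec, add_zero, hb, mulVec_mulVec, hP1]

theorem dotProduct_sub_pinv_add_one_sub_mulVec_eq_zero [Fintype m] {A : Matrix m n ℝ}
    {Adag : Matrix n m ℝ} (hP4 : (Adag * A)ᵀ = Adag * A) {b : m → ℝ} {xs : n → ℝ}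
    (hb : b = A *ᵥ xs) (x0 : n → ℝ) {v : n → ℝ} (hv : A *ᵥ v = 0) :
    v ⬝ᵥ (x0 - (Adag *ᵥ b + (1 - Adag * A) *ᵥ x0)) = 0 := by
  have h : x0 - (Adag *ᵥ b + (1 - Adag * A) *ᵥ x0) = (Adag * A) *ᵥ (x0 - xs) := by
    rw [hb, sub_mulVec, one_mulVec, mulVec_sub, mulVec_mulVec]
    abel
  rw [h, dotProduct_mulVec, ← mulVec_transpose, hP4, ← mulVec_mulVec, hv, mulVec_zero,
    zero_dotProduct]

end RrDR

open RrDR in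
theorem stmt_18_general {m n : ℕ} (A : Matrix (Fin m) (Fin n) ℝ)
    (xs : Fin n → ℝ) (b : Fin m → ℝ) (hb : b = A.mulVec xs)
    (Adag : Matrix (Fin n) (Fin m) ℝ)
    (hP1 : A * Adag * A = A)
    (hP4 : (Adag * A)ᵀ = Adag * A)
    (α : ℝ) (hα0 : 0 < α) (hα1 : α < 1) (r : ℕ)
    (sF : ℝ) (hsF : sF = ∑ i, ∑ j, (A i j) ^ 2)
    (p : Fin m → ℝ) (hp : ∀ i, p i = (∑ j, (A i j) ^ 2) / sF)
    (μ : ℝ) (hμpos : 0 < μ)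
    (hμeig : ∃ v : Fin n → ℝ, v ≠ 0 ∧ (Aᵀ * A).mulVec v = μ • v)
    (hμmin : ∀ lam : ℝ, lam ≠ 0 → (∃ v : Fin n → ℝ, v ≠ 0 ∧ (Aᵀ * A).mulVec v = lam • v) →
      μ ≤ lam)
    (step : (Fin r → Fin m) → (Fin n → ℝ) → (Fin n → ℝ))
    (hstep : ∀ blk y, step blk y = (1 - α) • y
      + α • ((List.ofFn blk).foldl
          (fun z i => z - (2 * ((∑ j, A i j * z j) - b i) / ∑ j, (A i j) ^ 2) • A i) y))
    (x0 : Fin n → ℝ)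
    (X : ∀ k : ℕ, (Fin k → Fin r → Fin m) → (Fin n → ℝ))
    (hX : ∀ k (s : Fin k → Fin r → Fin m), X k s = (List.ofFn s).foldl (fun y blk => step blk y) x0)
    (xstar : Fin n → ℝ)
    (hxstar : xstar = Adag.mulVec b + (1 - Adag * A).mulVec x0) :
    ∀ k : ℕ,
      (∑ s : Fin k → Fin r → Fin m,
          (∏ i, ∏ j, p (s i j)) * ∑ l, (X k s l - xstar l) ^ 2) ≤
        (α ^ 2 + (1 - α) ^ 2 + 2 * α * (1 - α) * (1 - 2 * μ / sF) ^ r) ^ k *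
          ∑ l, (x0 l - xstar l) ^ 2 := by
  have htr : sF = (Aᵀ * A).trace := by
    rw [hsF, trace_transpose_mul_self]
    simp only [dotProduct, sq]
  subst htr
  have hμtr := (posSemidef_transpose_mul_self A).le_trace_of_mulVec_eq_smul hμeig
  have hAx : A *ᵥ xstar = b := hxstar ▸ mulVec_pinv_add_one_sub_mulVec hP1 hb x0
  have herr : ∀ blk y, step blk y - xstar = relaxReflectRows A α (List.ofFn blk) (y - xstar) := by
    intro blk y
    have hfold : (fun z i => z - (2 * ((∑ j, A i j * z j) - b i) / ∑ j, (A i j) ^ 2) • A i)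
        = fun z i => z - (2 * (A i ⬝ᵥ z - b i) / (A i ⬝ᵥ A i)) • A i := by
      simp only [dotProduct, sq]
    rw [hstep, hfold, relaxReflectRows, ← foldl_sub_eq_reflectRows hAx]
    module
  have hα : 0 ≤ α * (1 - α) := by nlinarith
  have hΦ : ∀ y : Fin n → ℝ, ∑ l, (y l - xstar l) ^ 2 = (y - xstar) ⬝ᵥ (y - xstar) := by
    simp [dotProduct, sq]
  have hq : ∀ i, p i = A i ⬝ᵥ A i / (Aᵀ * A).trace := by simpa only [dotProduct, sq] using hp
  intro k
  simp_rw [hX, hΦ, hq]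
  refine sum_prod_mul_foldl_ofFn_le
    (fun blk : Fin r → Fin m => ∏ j, A (blk j) ⬝ᵥ A (blk j) / (Aᵀ * A).trace)
    (fun blk => Finset.prod_nonneg fun j _ =>
      div_nonneg (dotProduct_self_star_nonneg _) (hμpos.le.trans hμtr)) step
    (fun y => (y - xstar) ⬝ᵥ (y - xstar)) (fun y => ∀ v, A *ᵥ v = 0 → v ⬝ᵥ (y - xstar) = 0)
    (fun blk y hy v hv => herr blk y ▸ dotProduct_relaxReflectRows_eq_zero hv (hy v hv) _ _)
    (relax_factor_nonneg hα hμpos.le hμtr r) (fun y hy => ?_) k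
    (fun v hv => hxstar ▸ dotProduct_sub_pinv_add_one_sub_mulVec_eq_zero hP4 hb x0 hv)
  simp only [herr]
  exact sum_prod_mul_dotProduct_self_relaxReflectRows_le (hμpos.trans_le hμtr).ne' hμeig hμmin
    hα r hy

/-- RrDR linear convergence in expectation (Theorem 3.1): with rows sampled with
probability `‖aᵢ‖²/‖A‖_F²`, `r` independent reflections per step and `α`-relaxed
averaging, and with `x₀* = A†b + (I - A†A)x⁰`,
`E[‖xᵏ - x₀*‖²] ≤ (α² + (1-α)² + 2α(1-α)(1 - 2σ²_min(A)/‖A‖_F²)ʳ)ᵏ ‖x⁰ - x₀*‖²`.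
Here `μ = σ²_min(A)` is the smallest nonzero eigenvalue of `AᵀA`, the pseudoinverse is
characterized by the Penrose conditions, and the expectation over the `k·r` sampled row
indices is written as the explicit weighted sum over `s : Fin k → Fin r → Fin m`. -/
theorem stmt_18 {m n : ℕ} (A : Matrix (Fin m) (Fin n) ℝ)
    (hrows : ∀ i, A i ≠ 0)
    (xs : Fin n → ℝ) (b : Fin m → ℝ) (hb : b = A.mulVec xs)
    (Adag : Matrix (Fin n) (Fin m) ℝ)
    (hP1 : A * Adag * A = A) (hP2 : Adag * A * Adag = Adag)
    (hP3 : (A * Adag)ᵀ = A * Adag) (hP4 : (Adag * A)ᵀ = Adag * A)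
    (α : ℝ) (hα0 : 0 < α) (hα1 : α < 1) (r : ℕ) (hr : 1 ≤ r)
    (sF : ℝ) (hsF : sF = ∑ i, ∑ j, (A i j) ^ 2)
    (p : Fin m → ℝ) (hp : ∀ i, p i = (∑ j, (A i j) ^ 2) / sF)
    (μ : ℝ) (hμpos : 0 < μ)
    (hμeig : ∃ v : Fin n → ℝ, v ≠ 0 ∧ (Aᵀ * A).mulVec v = μ • v)
    (hμmin : ∀ lam : ℝ, lam ≠ 0 → (∃ v : Fin n → ℝ, v ≠ 0 ∧ (Aᵀ * A).mulVec v = lam • v) →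
      μ ≤ lam)
    (step : (Fin r → Fin m) → (Fin n → ℝ) → (Fin n → ℝ))
    (hstep : ∀ blk y, step blk y = (1 - α) • y
      + α • ((List.ofFn blk).foldl
          (fun z i => z - (2 * ((∑ j, A i j * z j) - b i) / ∑ j, (A i j) ^ 2) • A i) y))
    (x0 : Fin n → ℝ)
    (X : ∀ k : ℕ, (Fin k → Fin r → Fin m) → (Fin n → ℝ))
    (hX : ∀ k (s : Fin k → Fin r → Fin m), X k s = (List.ofFn s).foldl (fun y blk => step blk y) x0)
    (xstar : Fin n → ℝ)
    (hxstar : xstar = Adag.mulVec b + (1 - Adag * A).mulVec x0) :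
    ∀ k : ℕ,
      (∑ s : Fin k → Fin r → Fin m,
          (∏ i, ∏ j, p (s i j)) * ∑ l, (X k s l - xstar l) ^ 2) ≤
        (α ^ 2 + (1 - α) ^ 2 + 2 * α * (1 - α) * (1 - 2 * μ / sF) ^ r) ^ k *
          ∑ l, (x0 l - xstar l) ^ 2 :=
  stmt_18_general A xs b hb Adag hP1 hP4 α hα0 hα1 r sF hsF p hp μ hμpos hμeig hμmin step hstep x0 X
    hX xstar hxstar
end
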